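/- Let L be an integral lattice, Δ ⊆ L a set of elements of square -2, and Γ_Δ the group generated by the reflections in elements of Δ. Suppose α, α* ∈ L have square -2, α - α* lies in the radical of L, and there exists δ ∈ Δ with α*·δ = 1. Then α·δ = 1 and γ_δ(γ_α(δ)) = α; in particular, if α* is Γ_Δ-conjugate to elements of Δ and δ ∈ Δ, then α is Γ_{Δ∪{α}}-conjugate to δ. -/

import Mathlib

/-!
Because `α - α*` is radical, `α` pairs with every vector exactly as `α*` does, so `α·δ = 1`.
For two `(-2)`-vectors `α, δ` with `α·δ = 1` one computes `γ_α(δ) = δ + α` and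
`γ_δ(δ + α) = α`, so the product `γ_δ γ_α` of two generators of `Γ_{Δ ∪ {α}}` maps `δ` to `α`.
-/

section NegTwoReflection

variable {L : Type*} [AddCommGroup L] [Module ℤ L] (B : L →ₗ[ℤ] L →ₗ[ℤ] ℤ)

/-- The reflection `γ_β(x) = x + (x·β) β`, i.e. Mathlib's reflection for the functional
`-(· ⬝ β)`, which takes the value `2` at `β`. -/
noncomputable def negTwoReflection (β : L) (hβ : B β β = -2) : L ≃ₗ[ℤ] L :=
  Module.reflection (x := β) (f := -B.flip β) (by simp [hβ])

lemma negTwoReflection_apply (β : L) (hβ : B β β = -2) (x : L) :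
    negTwoReflection B β hβ x = x + B x β • β := by
  rw [negTwoReflection, Module.reflection_apply, ← Int.cast_smul_eq_zsmul ℤ]
  simp

lemma negTwoReflection_negTwoReflection_self_eq_of_apply_eq_one {α δ : L}
    (hα : B α α = -2) (hδ : B δ δ = -2) (hαδ : B α δ = 1) (hδα : B δ α = 1) :
    negTwoReflection B δ hδ (negTwoReflection B α hα δ) = α := by
  simp [negTwoReflection_apply, hδ, hαδ, hδα]

lemma negTwoReflection_mem_closure {S : Set L} {β : L} (hβS : β ∈ S) (hβ : B β β = -2) :
    negTwoReflection B β hβ ∈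
      Subgroup.closure {r : L ≃ₗ[ℤ] L | ∃ β ∈ S, ∀ x, r x = x + B x β • β} :=
  Subgroup.subset_closure ⟨β, hβS, negTwoReflection_apply B β hβ⟩

end NegTwoReflection

theorem conjugation_via_radical_general
    (L : Type*) [AddCommGroup L] [Module ℤ L]
    (B : L →ₗ[ℤ] L →ₗ[ℤ] ℤ) (hsym : ∀ x y, B x y = B y x)
    (Δ : Set L) (hΔ : ∀ δ ∈ Δ, B δ δ = -2)
    (α αs δ : L) (hα : B α α = -2)
    (hrad : ∀ x : L, B (α - αs) x = 0)
    (hδ : δ ∈ Δ) (h1 : B αs δ = 1) :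
    B α δ = 1 ∧
    (δ + B δ α • α) + B (δ + B δ α • α) δ • δ = α ∧
    ∃ g ∈ Subgroup.closure
        {r : L ≃ₗ[ℤ] L | ∃ β ∈ Δ ∪ {α}, ∀ x, r x = x + B x β • β},
      g δ = α := by
  have hαδ : B α δ = 1 := by
    rw [← h1, ← sub_eq_zero, ← LinearMap.sub_apply, ← map_sub]
    exact hrad δ
  have hδα : B δ α = 1 := (hsym δ α).trans hαδ
  have hδδ : B δ δ = -2 := hΔ δ hδ
  have hconj := negTwoReflection_negTwoReflection_self_eq_of_apply_eq_one B hα hδδ hαδ hδα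
  refine ⟨hαδ, by simpa only [negTwoReflection_apply] using hconj,
    negTwoReflection B δ hδδ * negTwoReflection B α hα, ?_, hconj⟩
  exact mul_mem (negTwoReflection_mem_closure B (Or.inl hδ) hδδ)
    (negTwoReflection_mem_closure B (Or.inr rfl) hα)

/-- If α, α* have square -2, α - α* is radical, and δ ∈ Δ with α*·δ = 1, then
α·δ = 1 and γ_δ(γ_α(δ)) = α; in particular α is conjugate to δ under the group
generated by reflections in Δ ∪ {α}. -/
theorem conjugation_via_radical
    (L : Type*) [AddCommGroup L] [Module ℤ L] [Module.Free ℤ L] [Module.Finite ℤ L]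
    (B : L →ₗ[ℤ] L →ₗ[ℤ] ℤ) (hsym : ∀ x y, B x y = B y x)
    (Δ : Set L) (hΔ : ∀ δ ∈ Δ, B δ δ = -2)
    (α αs δ : L) (hα : B α α = -2) (hαs : B αs αs = -2)
    (hrad : ∀ x : L, B (α - αs) x = 0)
    (hδ : δ ∈ Δ) (h1 : B αs δ = 1) :
    B α δ = 1 ∧
    (δ + B δ α • α) + B (δ + B δ α • α) δ • δ = α ∧
    ∃ g ∈ Subgroup.closure
        {r : L ≃ₗ[ℤ] L | ∃ β ∈ Δ ∪ {α}, ∀ x, r x = x + B x β • β},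
      g δ = α :=
  conjugation_via_radical_general L B hsym Δ hΔ α αs δ hα hrad hδ h1
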